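/- Let γ₁, γ₂: ℝ/ℤ → ℝ⁵ be smooth closed curves on the light cone of the Minkowski form B on ℝ⁵ (B(γ_i(t), γ_i(t)) = 0 for all t) such that B(γ₁(x), γ₂(y)) ≠ 0 for all x, y (the two corresponding curves in S³ are disjoint). Define s(x,y) = γ₁(x) ∧ γ₂(y) / √(B₂(γ₁(x)∧γ₂(y), γ₁(x)∧γ₂(y))) ∈ ⋀²ℝ⁵. Then the total signed area of the surface s(γ₁×γ₂) vanishes: ∫₀¹ ∫₀¹ B₂( ∂s/∂x (x,y), ∂s/∂y (x,y) ) dx dy = 0. -/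

import Mathlib

noncomputable section
open Filter Topology

/-- The Minkowski bilinear form `B(x,y) = −x₀y₀ + Σ_{i=1}^{4} x_i y_i` on `ℝ⁵`. -/
def B5 (x y : Fin 5 → ℝ) : ℝ := (∑ i, x i * y i) - 2 * x 0 * y 0

/-- The Lorentz signature vector `η = (−1,1,1,1,1)`. -/
def lsgn : Fin 5 → ℝ := fun i => if i = 0 then -1 else 1

/-- The wedge `a ∧ b ∈ ⋀²ℝ⁵`, realized as the antisymmetric array
`(a ∧ b)_{ij} = a_i b_j − a_j b_i`. -/
def wedge2 (a b : Fin 5 → ℝ) : Fin 5 → Fin 5 → ℝ := fun i j => a i * b j - a j * b i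

/-- The bilinear form induced by `B` on `⋀²ℝ⁵`: on decomposables it satisfies
`B₂(a∧b, c∧d) = −(B(a,c)B(b,d) − B(a,d)B(b,c))`. -/
def B2 (M N : Fin 5 → Fin 5 → ℝ) : ℝ :=
  -(1 / 2) * ∑ i, ∑ j, lsgn i * lsgn j * M i j * N i j

/-- The normalized wedge of a pair of lightlike curves, representing the pair of points
of `S³` as an oriented 0-sphere. -/
def nwedge (γ₁ γ₂ : ℝ → (Fin 5 → ℝ)) (x y : ℝ) : Fin 5 → Fin 5 → ℝ :=
  (Real.sqrt (B2 (wedge2 (γ₁ x) (γ₂ y)) (wedge2 (γ₁ x) (γ₂ y))))⁻¹ •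
    wedge2 (γ₁ x) (γ₂ y)

lemma B2_wedge (a b c d : Fin 5 → ℝ) :
    B2 (wedge2 a b) (wedge2 c d) = -(B5 a c * B5 b d - B5 a d * B5 b c) := by
  simp [B2, wedge2, B5, lsgn, Fin.sum_univ_five]; ring

lemma B2_bilin (c d e g : ℝ) (M N P Q : Fin 5 → Fin 5 → ℝ) :
    B2 (c • M + d • N) (e • P + g • Q) =
      c*e*B2 M P + c*g*B2 M Q + d*e*B2 N P + d*g*B2 N Q := by
  simp [B2, Fin.sum_univ_five]; ring

lemma B5_symm (x y : Fin 5 → ℝ) : B5 x y = B5 y x := by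
  simp [B5, Fin.sum_univ_five]; ring

lemma hasDerivAt_comp_pi {γ : ℝ → Fin 5 → ℝ} (h : ContDiff ℝ (⊤ : ℕ∞) γ) (t : ℝ) (i : Fin 5) :
    HasDerivAt (fun u => γ u i) (deriv γ t i) t :=
  hasDerivAt_pi.1 (h.differentiable (by simp) t).hasDerivAt i

lemma hasDerivAt_B5_left {γ : ℝ → Fin 5 → ℝ} (h : ContDiff ℝ (⊤ : ℕ∞) γ) (w : Fin 5 → ℝ) (t : ℝ) :
    HasDerivAt (fun u => B5 (γ u) w) (B5 (deriv γ t) w) t := by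
  have hs : HasDerivAt (fun u => ∑ i : Fin 5, γ u i * w i)
      (∑ i : Fin 5, deriv γ t i * w i) t :=
    HasDerivAt.fun_sum fun i _ => (hasDerivAt_comp_pi h t i).mul_const (w i)
  have h0 : HasDerivAt (fun u => 2 * γ u 0 * w 0) (2 * deriv γ t 0 * w 0) t :=
    ((hasDerivAt_comp_pi h t 0).const_mul 2).mul_const (w 0)
  exact hs.sub h0

lemma hasDerivAt_B5_right {γ : ℝ → Fin 5 → ℝ} (h : ContDiff ℝ (⊤ : ℕ∞) γ) (w : Fin 5 → ℝ) (t : ℝ) :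
    HasDerivAt (fun u => B5 w (γ u)) (B5 w (deriv γ t)) t := by
  have : ∀ g : Fin 5 → ℝ, B5 w g = B5 g w := fun g => B5_symm w g
  simp only [this]
  exact hasDerivAt_B5_left h w t

lemma hasDerivAt_wedge_left {γ : ℝ → Fin 5 → ℝ} (h : ContDiff ℝ (⊤ : ℕ∞) γ) (w : Fin 5 → ℝ) (t : ℝ) :
    HasDerivAt (fun u => wedge2 (γ u) w) (wedge2 (deriv γ t) w) t := by
  rw [hasDerivAt_pi]; intro i; rw [hasDerivAt_pi]; intro j
  exact ((hasDerivAt_comp_pi h t i).mul_const (w j)).sub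
    ((hasDerivAt_comp_pi h t j).mul_const (w i))

lemma hasDerivAt_wedge_right {γ : ℝ → Fin 5 → ℝ} (h : ContDiff ℝ (⊤ : ℕ∞) γ) (w : Fin 5 → ℝ) (t : ℝ) :
    HasDerivAt (fun u => wedge2 w (γ u)) (wedge2 w (deriv γ t)) t := by
  rw [hasDerivAt_pi]; intro i; rw [hasDerivAt_pi]; intro j
  exact ((hasDerivAt_comp_pi h t j).const_mul (w i)).sub
    ((hasDerivAt_comp_pi h t i).const_mul (w j))

lemma B5_deriv_null {γ : ℝ → Fin 5 → ℝ} (h : ContDiff ℝ (⊤ : ℕ∞) γ)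
    (hl : ∀ t, B5 (γ t) (γ t) = 0) (t : ℝ) : B5 (deriv γ t) (γ t) = 0 := by
  have hs : HasDerivAt (fun u => ∑ i : Fin 5, γ u i * γ u i)
      (∑ i : Fin 5, (deriv γ t i * γ t i + γ t i * deriv γ t i)) t :=
    HasDerivAt.fun_sum fun i _ => (hasDerivAt_comp_pi h t i).mul (hasDerivAt_comp_pi h t i)
  have h0 : HasDerivAt (fun u => 2 * γ u 0 * γ u 0)
      (2 * deriv γ t 0 * γ t 0 + 2 * γ t 0 * deriv γ t 0) t :=
    ((hasDerivAt_comp_pi h t 0).const_mul 2).mul (hasDerivAt_comp_pi h t 0)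
  have hd := hs.fun_sub h0
  have hz : HasDerivAt (fun u => B5 (γ u) (γ u)) (0 : ℝ) t := by
    have : (fun u => B5 (γ u) (γ u)) = fun _ => (0:ℝ) := funext hl
    rw [this]; exact hasDerivAt_const t 0
  have he : (fun x => ∑ i : Fin 5, γ x i * γ x i - 2 * γ x 0 * γ x 0)
      = fun u => B5 (γ u) (γ u) := by
    funext u; simp [B5]
  rw [he] at hd
  have h2 := hd.unique hz
  simp only [B5, Fin.sum_univ_five] at h2 ⊢
  ring_nf at h2 ⊢
  linarith

lemma nwedge_eq {γ₁ γ₂ : ℝ → (Fin 5 → ℝ)} (hl₁ : ∀ t, B5 (γ₁ t) (γ₁ t) = 0)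
    (hl₂ : ∀ t, B5 (γ₂ t) (γ₂ t) = 0) (u v : ℝ) :
    nwedge γ₁ γ₂ u v = |B5 (γ₁ u) (γ₂ v)|⁻¹ • wedge2 (γ₁ u) (γ₂ v) := by
  unfold nwedge
  rw [B2_wedge, hl₁, hl₂, B5_symm (γ₂ v) (γ₁ u)]
  rw [show -(0 * 0 - B5 (γ₁ u) (γ₂ v) * B5 (γ₁ u) (γ₂ v)) = (B5 (γ₁ u) (γ₂ v))^2 by ring,
    Real.sqrt_sq_eq_abs]

lemma key (γ₁ γ₂ : ℝ → (Fin 5 → ℝ))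
    (h₁ : ContDiff ℝ (⊤ : ℕ∞) γ₁) (h₂ : ContDiff ℝ (⊤ : ℕ∞) γ₂)
    (hl₁ : ∀ t : ℝ, B5 (γ₁ t) (γ₁ t) = 0) (hl₂ : ∀ t : ℝ, B5 (γ₂ t) (γ₂ t) = 0)
    (hdisj : ∀ x y : ℝ, B5 (γ₁ x) (γ₂ y) ≠ 0) (x y : ℝ) :
    B2 (deriv (fun u => nwedge γ₁ γ₂ u y) x) (deriv (fun v => nwedge γ₁ γ₂ x v) y)
      = (B5 (deriv γ₁ x) (deriv γ₂ y) * B5 (γ₁ x) (γ₂ y)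
          - B5 (deriv γ₁ x) (γ₂ y) * B5 (γ₁ x) (deriv γ₂ y)) / (B5 (γ₁ x) (γ₂ y))^2 := by
  set F := B5 (γ₁ x) (γ₂ y) with hFdef
  set Fx := B5 (deriv γ₁ x) (γ₂ y) with hFxdef
  set Fy := B5 (γ₁ x) (deriv γ₂ y) with hFydef
  set Fxy := B5 (deriv γ₁ x) (deriv γ₂ y) with hFxydef
  have hF0 : F ≠ 0 := hdisj x y
  set ε : ℝ := if 0 < F then 1 else -1 with hεdef
  have hε : ε = 1 ∨ ε = -1 := by
    rw [hεdef]; split <;> simp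
  have hne : ε * F ≠ 0 := by
    rcases hε with h | h <;> rw [h] <;> simpa using hF0
  -- x-direction eventual equality
  have hcontx : ContinuousAt (fun u => B5 (γ₁ u) (γ₂ y)) x :=
    (hasDerivAt_B5_left h₁ (γ₂ y) x).continuousAt
  have hconty : ContinuousAt (fun v => B5 (γ₁ x) (γ₂ v)) y :=
    (hasDerivAt_B5_right h₂ (γ₁ x) y).continuousAt
  have habs : ∀ t : ℝ, (if 0 < F then (0:ℝ) < t else t < 0) → |t| = ε * t := by
    intro t ht
    by_cases h : 0 < F
    · rw [if_pos h] at ht; rw [hεdef, if_pos h, one_mul, abs_of_pos ht]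
    · rw [if_neg h] at ht; rw [hεdef, if_neg h, abs_of_neg ht]; ring
  have hsgnset : ∀ᶠ t in 𝓝 F, (if 0 < F then (0:ℝ) < t else t < 0) := by
    by_cases h : 0 < F
    · simp only [if_pos h]; exact eventually_gt_nhds h
    · simp only [if_neg h]
      exact eventually_lt_nhds (lt_of_le_of_ne (not_lt.1 h) hF0)
  have hevx : (fun u => nwedge γ₁ γ₂ u y)
      =ᶠ[𝓝 x] fun u => (ε * B5 (γ₁ u) (γ₂ y))⁻¹ • wedge2 (γ₁ u) (γ₂ y) := by
    filter_upwards [hcontx.eventually hsgnset] with u hu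
    rw [nwedge_eq hl₁ hl₂, habs _ hu]
  have hevy : (fun v => nwedge γ₁ γ₂ x v)
      =ᶠ[𝓝 y] fun v => (ε * B5 (γ₁ x) (γ₂ v))⁻¹ • wedge2 (γ₁ x) (γ₂ v) := by
    filter_upwards [hconty.eventually hsgnset] with v hv
    rw [nwedge_eq hl₁ hl₂, habs _ hv]
  -- derivatives
  have hcx : HasDerivAt (fun u => (ε * B5 (γ₁ u) (γ₂ y))⁻¹) (-(ε * Fx) / (ε * F)^2) x :=
    ((hasDerivAt_B5_left h₁ (γ₂ y) x).const_mul ε).inv hne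
  have hcy : HasDerivAt (fun v => (ε * B5 (γ₁ x) (γ₂ v))⁻¹) (-(ε * Fy) / (ε * F)^2) y :=
    ((hasDerivAt_B5_right h₂ (γ₁ x) y).const_mul ε).inv hne
  have hDx : HasDerivAt (fun u => nwedge γ₁ γ₂ u y)
      ((ε * F)⁻¹ • wedge2 (deriv γ₁ x) (γ₂ y)
        + (-(ε * Fx) / (ε * F)^2) • wedge2 (γ₁ x) (γ₂ y)) x :=
    ((hcx.smul (hasDerivAt_wedge_left h₁ (γ₂ y) x))).congr_of_eventuallyEq hevx
  have hDy : HasDerivAt (fun v => nwedge γ₁ γ₂ x v)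
      ((ε * F)⁻¹ • wedge2 (γ₁ x) (deriv γ₂ y)
        + (-(ε * Fy) / (ε * F)^2) • wedge2 (γ₁ x) (γ₂ y)) y :=
    ((hcy.smul (hasDerivAt_wedge_right h₂ (γ₁ x) y))).congr_of_eventuallyEq hevy
  rw [hDx.deriv, hDy.deriv, B2_bilin]
  rw [B2_wedge, B2_wedge, B2_wedge, B2_wedge]
  have hbb' : B5 (γ₂ y) (deriv γ₂ y) = 0 := by
    rw [B5_symm]; exact B5_deriv_null h₂ hl₂ y
  simp only [B5_deriv_null h₁ hl₁ x, hl₁ x, hbb', B5_symm (γ₂ y) (γ₁ x),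
    ← hFdef, ← hFxdef, ← hFydef, ← hFxydef]
  rcases hε with h | h <;> rw [h] <;> field_simp <;> ring

lemma cont_B5_right {γ : ℝ → Fin 5 → ℝ} (hγ : Continuous γ) (w : Fin 5 → ℝ) :
    Continuous fun v => B5 w (γ v) := by
  unfold B5
  exact (continuous_finset_sum _ fun i _ =>
    continuous_const.mul ((continuous_apply i).comp hγ)).sub
    (continuous_const.mul ((continuous_apply 0).comp hγ))

/-- For a two-component link, represented by disjoint smooth closed lightlike curves
`γ₁, γ₂`, the total signed area of the surface `s(γ₁ × γ₂)` in the space of oriented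
0-spheres of S³ vanishes: `∫₀¹∫₀¹ B₂(∂s/∂x, ∂s/∂y) dx dy = 0`. -/
theorem signed_area_of_link_vanishes (γ₁ γ₂ : ℝ → (Fin 5 → ℝ))
    (h₁ : ContDiff ℝ (⊤ : ℕ∞) γ₁) (h₂ : ContDiff ℝ (⊤ : ℕ∞) γ₂)
    (hper₁ : Function.Periodic γ₁ 1) (hper₂ : Function.Periodic γ₂ 1)
    (hl₁ : ∀ t : ℝ, B5 (γ₁ t) (γ₁ t) = 0) (hl₂ : ∀ t : ℝ, B5 (γ₂ t) (γ₂ t) = 0)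
    (hdisj : ∀ x y : ℝ, B5 (γ₁ x) (γ₂ y) ≠ 0) :
    (∫ x in (0:ℝ)..1, ∫ y in (0:ℝ)..1,
        B2 (deriv (fun u => nwedge γ₁ γ₂ u y) x)
           (deriv (fun v => nwedge γ₁ γ₂ x v) y)) = 0 := by
  have hinner : ∀ x : ℝ, (∫ y in (0:ℝ)..1,
      B2 (deriv (fun u => nwedge γ₁ γ₂ u y) x)
         (deriv (fun v => nwedge γ₁ γ₂ x v) y)) = 0 := by
    intro x
    set g : ℝ → ℝ := fun v => B5 (deriv γ₁ x) (γ₂ v) / B5 (γ₁ x) (γ₂ v) with hgdef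
    set g' : ℝ → ℝ := fun v =>
      (B5 (deriv γ₁ x) (deriv γ₂ v) * B5 (γ₁ x) (γ₂ v)
        - B5 (deriv γ₁ x) (γ₂ v) * B5 (γ₁ x) (deriv γ₂ v)) / (B5 (γ₁ x) (γ₂ v))^2
      with hg'def
    have hHD : ∀ v : ℝ, HasDerivAt g (g' v) v := fun v =>
      (hasDerivAt_B5_right h₂ (deriv γ₁ x) v).div
        (hasDerivAt_B5_right h₂ (γ₁ x) v) (hdisj x v)
    have hcγ : Continuous γ₂ := h₂.continuous
    have hcγ' : Continuous (deriv γ₂) := h₂.continuous_deriv (by simp)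
    have hcont' : Continuous g' := by
      apply Continuous.div
      · exact ((cont_B5_right hcγ' (deriv γ₁ x)).mul (cont_B5_right hcγ (γ₁ x))).sub
          ((cont_B5_right hcγ (deriv γ₁ x)).mul (cont_B5_right hcγ' (γ₁ x)))
      · exact (cont_B5_right hcγ (γ₁ x)).pow 2
      · exact fun v => pow_ne_zero 2 (hdisj x v)
    have hcongr : (∫ y in (0:ℝ)..1,
        B2 (deriv (fun u => nwedge γ₁ γ₂ u y) x)
           (deriv (fun v => nwedge γ₁ γ₂ x v) y)) = ∫ y in (0:ℝ)..1, g' y :=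
      intervalIntegral.integral_congr fun y _ => key γ₁ γ₂ h₁ h₂ hl₁ hl₂ hdisj x y
    rw [hcongr, intervalIntegral.integral_eq_sub_of_hasDerivAt
      (fun v _ => hHD v) (hcont'.intervalIntegrable 0 1)]
    have h10 : γ₂ 1 = γ₂ 0 := by simpa using hper₂ 0
    simp [hgdef, h10]
  simp only [hinner, intervalIntegral.integral_zero]
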